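/- Let p be an odd prime and let G be the subgroup of GL(2, Z/p) generated by the matrices T = [[2,1],[−1,0]]^t acting by T(c_1,c_2) = (2c_1 − c_2, c_1) (Dehn twist) and the reflection-induced map ψ(c_1, c_2) = (−c_1, −c_2), together with the crosscap-slide map Y(c_1, c_2) = (−c_1 + 2c_2, c_2). Then every nonzero orbit of (Z/p)^2 under G contains an element of the form (k, 0) with 1 ≤ k ≤ p−1 or of the form (ℓ, ℓ) with 1 ≤ ℓ ≤ p−1. -/

import Mathlib

/-
The Dehn twist alone suffices. Its matrix is unipotent, `T = 1 + N` with `N = !![1, -1; 1, -1]`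
and `N² = 0`, so `Tⁿ v = v + n (v₀ - v₁) (1, 1)`: powers of `T` keep the difference `v₀ - v₁`
and slide `v` along the direction `(1, 1)`. If `v₀ = v₁` then `v` is already of the form
`(ℓ, ℓ)`; otherwise `n ≡ -v₁ / (v₀ - v₁) (mod p)` moves `v` to `(v₀ - v₁, 0)`.
-/

open Matrix

section DehnTwist

variable {R : Type*} [CommRing R]

lemma dehnTwist_pow (n : ℕ) :
    (!![2, -1; 1, 0] : Matrix (Fin 2) (Fin 2) R) ^ n = !![1 + (n : R), -n; n, 1 - n] := by
  induction n with
  | zero => simp [Matrix.one_fin_two]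
  | succ n ih =>
    rw [pow_succ, ih]
    ext i j
    fin_cases i <;> fin_cases j <;> simp [Matrix.mul_apply] <;> ring

lemma dehnTwist_pow_mulVec (n : ℕ) (v : Fin 2 → R) :
    (!![2, -1; 1, 0] : Matrix (Fin 2) (Fin 2) R) ^ n *ᵥ v
      = ![v 0 + n * (v 0 - v 1), v 1 + n * (v 0 - v 1)] := by
  rw [dehnTwist_pow]
  ext i
  fin_cases i <;> simp [Matrix.mulVec, dotProduct] <;> ring

end DehnTwist

lemma exists_dehnTwist_pow_mulVec_eq {p : ℕ} [Fact p.Prime] (v : Fin 2 → ZMod p)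
    (hv : v 0 ≠ v 1) :
    ∃ n : ℕ, (!![2, -1; 1, 0] : Matrix (Fin 2) (Fin 2) (ZMod p)) ^ n *ᵥ v = ![v 0 - v 1, 0] := by
  have hd : v 0 - v 1 ≠ 0 := sub_ne_zero.mpr hv
  refine ⟨(-v 1 / (v 0 - v 1)).val, ?_⟩
  rw [dehnTwist_pow_mulVec, ZMod.natCast_zmod_val, div_mul_cancel₀ _ hd]
  ext i
  fin_cases i <;> simp [sub_eq_add_neg]

theorem stmt10_general (p : ℕ) (hp : p.Prime)
    (T ψ Y : GL (Fin 2) (ZMod p))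
    (hT : (T : Matrix (Fin 2) (Fin 2) (ZMod p)) = !![2, -1; 1, 0]) :
    ∀ v : Fin 2 → ZMod p, v ≠ 0 →
      ∃ g ∈ Subgroup.closure ({T, ψ, Y} : Set (GL (Fin 2) (ZMod p))),
        ∃ k : ZMod p, k ≠ 0 ∧
          ((g : Matrix (Fin 2) (Fin 2) (ZMod p)).mulVec v = ![k, 0] ∨
           (g : Matrix (Fin 2) (Fin 2) (ZMod p)).mulVec v = ![k, k]) := by
  have : Fact p.Prime := ⟨hp⟩
  intro v hv
  by_cases hdiag : v 0 = v 1
  · have hv0 : v 0 ≠ 0 := fun h0 ↦ hv <| by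
      ext i; fin_cases i <;> simp [h0, ← hdiag]
    refine ⟨1, one_mem _, v 0, hv0, Or.inr ?_⟩
    ext i; fin_cases i <;> simp [hdiag]
  · obtain ⟨n, hn⟩ := exists_dehnTwist_pow_mulVec_eq v hdiag
    refine ⟨T ^ n, pow_mem (Subgroup.subset_closure (by simp)) n, v 0 - v 1,
      sub_ne_zero.mpr hdiag, Or.inl ?_⟩
    rwa [Units.val_pow_eq_pow_val, hT]

/-- Let `p` be an odd prime and let `G ≤ GL(2, ℤ/p)` be the subgroup
generated by the Dehn-twist map `T(c₁,c₂) = (2c₁ - c₂, c₁)`, the reflection-induced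
map `ψ(c₁,c₂) = (-c₁,-c₂)`, and the crosscap-slide map `Y(c₁,c₂) = (-c₁ + 2c₂, c₂)`.
Then every nonzero orbit of `(ℤ/p)²` under `G` contains an element `(k, 0)` with
`k ≠ 0` or an element `(ℓ, ℓ)` with `ℓ ≠ 0`. -/
theorem stmt10 (p : ℕ) (hp : p.Prime) (hodd : Odd p)
    (T ψ Y : GL (Fin 2) (ZMod p))
    (hT : (T : Matrix (Fin 2) (Fin 2) (ZMod p)) = !![2, -1; 1, 0])
    (hψ : (ψ : Matrix (Fin 2) (Fin 2) (ZMod p)) = !![-1, 0; 0, -1])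
    (hY : (Y : Matrix (Fin 2) (Fin 2) (ZMod p)) = !![-1, 2; 0, 1]) :
    ∀ v : Fin 2 → ZMod p, v ≠ 0 →
      ∃ g ∈ Subgroup.closure ({T, ψ, Y} : Set (GL (Fin 2) (ZMod p))),
        ∃ k : ZMod p, k ≠ 0 ∧
          ((g : Matrix (Fin 2) (Fin 2) (ZMod p)).mulVec v = ![k, 0] ∨
           (g : Matrix (Fin 2) (Fin 2) (ZMod p)).mulVec v = ![k, k]) :=
  stmt10_general p hp T ψ Y hT
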